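/- (1) If x and y are numbers, then the Conway product x·y is a number. (2) If x₁, x₂, y are numbers with x₁ ≈ x₂, then x₁·y ≈ x₂·y. -/

import Mathlib

/-! `SetTheory.PGame` has been removed from Mathlib; it is re-defined here with its old meaning. -/
universe u

noncomputable section

namespace SetTheory

inductive PGame : Type (u + 1)
  | mk : ∀ α β : Type u, (α → PGame) → (β → PGame) → PGame

namespace PGame

def leAux (x : PGame.{u}) : PGame.{u} → Prop × Prop := by
  induction x with | mk xl xr _ _ IHxl IHxr => ?_
  intro y
  induction y with | mk yl yr yL yR IHyl IHyr => ?_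
  exact ((∀ i, ¬ (IHxl i (mk yl yr yL yR)).2) ∧ (∀ j, ¬ (IHyr j).2),
    (∀ j, ¬ (IHyl j).1) ∧ (∀ i, ¬ (IHxr i (mk yl yr yL yR)).1))

instance : LE PGame.{u} := ⟨fun x y => (leAux x y).1⟩

instance : LT PGame.{u} := ⟨fun x y => x ≤ y ∧ ¬ y ≤ x⟩

def Equiv (x y : PGame.{u}) : Prop := x ≤ y ∧ y ≤ x

instance : HasEquiv PGame.{u} := ⟨Equiv⟩

def neg : PGame.{u} → PGame.{u}
  | mk l r L R => mk r l (fun i => neg (R i)) (fun i => neg (L i))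

instance : Neg PGame.{u} := ⟨neg⟩

def add (x : PGame.{u}) : PGame.{u} → PGame.{u} := by
  induction x with | mk xl xr _ _ IHxl IHxr => ?_
  intro y
  induction y with | mk yl yr yL yR IHyl IHyr => ?_
  exact mk (xl ⊕ yl) (xr ⊕ yr) (Sum.rec (fun i => IHxl i (mk yl yr yL yR)) IHyl)
    (Sum.rec (fun i => IHxr i (mk yl yr yL yR)) IHyr)

instance : Add PGame.{u} := ⟨add⟩

instance : Sub PGame.{u} := ⟨fun x y => x + -y⟩

def mul (x : PGame.{u}) : PGame.{u} → PGame.{u} := by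
  induction x with | mk xl xr _ _ IHxl IHxr => ?_
  intro y
  induction y with | mk yl yr yL yR IHyl IHyr => ?_
  exact mk ((xl × yl) ⊕ (xr × yr)) ((xl × yr) ⊕ (xr × yl))
    (Sum.rec (fun p => IHxl p.1 (mk yl yr yL yR) + IHyl p.2 - IHxl p.1 (yL p.2))
      (fun p => IHxr p.1 (mk yl yr yL yR) + IHyr p.2 - IHxr p.1 (yR p.2)))
    (Sum.rec (fun p => IHxl p.1 (mk yl yr yL yR) + IHyr p.2 - IHxl p.1 (yR p.2))
      (fun p => IHxr p.1 (mk yl yr yL yR) + IHyl p.2 - IHxr p.1 (yL p.2)))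

instance : Mul PGame.{u} := ⟨mul⟩

def Numeric : PGame.{u} → Prop
  | mk _ _ L R => (∀ i j, L i < R j) ∧ (∀ i, Numeric (L i)) ∧ ∀ j, Numeric (R j)

end PGame

end SetTheory

end

open SetTheory PGame

/-!
We work in the quotient `Game` of games modulo `≈`, an ordered abelian group in which the options
of `x * y` become `⟦a * y⟧ + ⟦x * b⟧ - ⟦a * b⟧` for options `a` of `x` and `b` of `y`. Following
Conway, three statements are proved together, by well-founded induction on the multiset of games
involved, ordered by replacing a game by finitely many of its options:
`x * y` is numeric; `x₁ ≈ x₂` implies `⟦x₁ * y⟧ = ⟦x₂ * y⟧`; and `x₁ < x₂` implies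
`(x₂ - x₁) * (y₂ - y₁) > 0` whenever `y₁ < y₂` are `y` and one of its options.

A left and a right option of `x * y` always share a side in one factor; after commuting, they come
from two left (or two right) options `a`, `a'` of `x`, and comparing `a` with `a'` by trichotomy
reduces the inequality between them to the other two statements for `a`, `a'` and for options of
`y`. For the third statement, `x₁ < x₂` provides a left option of `x₂` that is `≥ x₁` or a right
option of `x₁` that is `≤ x₂`, and `(x₂ - x₁) * (y₂ - y₁)` is additive in `x₁, x₂`.
-/

theorem lt_of_lt_of_sub_eq_sub {α : Type*} [AddCommGroup α] [PartialOrder α]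
    [IsOrderedAddMonoid α] {a b c d : α} (h : c < d) (e : a - b = c - d) : a < b := by
  rw [← sub_neg, e]
  exact sub_neg.2 h

namespace SetTheory.PGame

def LeftMoves : PGame.{u} → Type u
  | mk l _ _ _ => l

def RightMoves : PGame.{u} → Type u
  | mk _ r _ _ => r

def moveLeft : (x : PGame.{u}) → x.LeftMoves → PGame.{u}
  | mk _ _ L _ => L

def moveRight : (x : PGame.{u}) → x.RightMoves → PGame.{u}
  | mk _ _ _ R => R

def IsOption (a : PGame.{u}) : PGame.{u} → Prop
  | mk _ _ L R => (∃ i, a = L i) ∨ ∃ j, a = R j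

theorem isOption_moveLeft (x : PGame.{u}) (i : x.LeftMoves) : IsOption (x.moveLeft i) x := by
  cases x; exact Or.inl ⟨i, rfl⟩

theorem isOption_moveRight (x : PGame.{u}) (j : x.RightMoves) : IsOption (x.moveRight j) x := by
  cases x; exact Or.inr ⟨j, rfl⟩

theorem wellFounded_isOption : WellFounded IsOption.{u} := by
  refine ⟨fun x => ?_⟩
  induction x with | mk l r L R ihl ihr => ?_
  refine Acc.intro _ fun a h => ?_
  rcases h with ⟨i, rfl⟩ | ⟨j, rfl⟩
  exacts [ihl i, ihr j]

/-! ### Order -/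

theorem leAux_mk_mk (xl xr : Type u) (xL : xl → PGame.{u}) (xR : xr → PGame.{u})
    (yl yr : Type u) (yL : yl → PGame.{u}) (yR : yr → PGame.{u}) :
    leAux (mk xl xr xL xR) (mk yl yr yL yR) =
      ((∀ i, ¬ (leAux (xL i) (mk yl yr yL yR)).2) ∧ ∀ j, ¬ (leAux (mk xl xr xL xR) (yR j)).2,
        (∀ j, ¬ (leAux (mk xl xr xL xR) (yL j)).1) ∧ ∀ i, ¬ (leAux (xR i) (mk yl yr yL yR)).1) :=
  rfl

/-- `leAux x y` is the pair `(x ≤ y, y ≤ x)`. -/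
theorem leAux_snd_iff_fst (x y : PGame.{u}) :
    ((leAux x y).2 ↔ (leAux y x).1) ∧ ((leAux y x).2 ↔ (leAux x y).1) := by
  induction x generalizing y with | mk xl xr xL xR IHxl IHxr => ?_
  induction y with | mk yl yr yL yR IHyl IHyr => ?_
  rw [leAux_mk_mk, leAux_mk_mk]
  exact ⟨and_congr (forall_congr' fun j => not_congr (IHyl j).2.symm)
      (forall_congr' fun i => not_congr (IHxr i _).2.symm),
    and_congr (forall_congr' fun i => not_congr (IHxl i _).1.symm)
      (forall_congr' fun j => not_congr (IHyr j).1.symm)⟩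

theorem mk_le_mk {xl xr : Type u} {xL : xl → PGame.{u}} {xR : xr → PGame.{u}}
    {yl yr : Type u} {yL : yl → PGame.{u}} {yR : yr → PGame.{u}} :
    mk xl xr xL xR ≤ mk yl yr yL yR ↔
      (∀ i, ¬ mk yl yr yL yR ≤ xL i) ∧ ∀ j, ¬ yR j ≤ mk xl xr xL xR := by
  change (leAux _ _).1 ↔ _
  rw [leAux_mk_mk]
  exact and_congr (forall_congr' fun _ => not_congr (leAux_snd_iff_fst _ _).1)
    (forall_congr' fun _ => not_congr (leAux_snd_iff_fst _ _).1)

theorem le_iff_forall_not_le {x y : PGame.{u}} :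
    x ≤ y ↔ (∀ i, ¬ y ≤ x.moveLeft i) ∧ ∀ j, ¬ y.moveRight j ≤ x := by
  cases x; cases y; exact mk_le_mk

protected theorem le_refl (x : PGame.{u}) : x ≤ x := by
  induction x with | mk xl xr xL xR IHl IHr => ?_
  exact mk_le_mk.2 ⟨fun i h => (le_iff_forall_not_le.1 h).1 i (IHl i),
    fun j h => (le_iff_forall_not_le.1 h).2 j (IHr j)⟩

/-- Transitivity is proved simultaneously for the three cyclic arrangements of `x, y, z`, since the
induction on each game passes through the others. -/
theorem le_trans_aux (x y z : PGame.{u}) :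
    (x ≤ y → y ≤ z → x ≤ z) ∧ (y ≤ z → z ≤ x → y ≤ x) ∧ (z ≤ x → x ≤ y → z ≤ y) := by
  induction x generalizing y z with | mk xl xr xL xR IHxl IHxr => ?_
  induction y generalizing z with | mk yl yr yL yR IHyl IHyr => ?_
  induction z with | mk zl zr zL zR IHzl IHzr => ?_
  refine ⟨fun h₁ h₂ => ?_, fun h₁ h₂ => ?_, fun h₁ h₂ => ?_⟩ <;>
    refine le_iff_forall_not_le.2 ⟨fun i h => ?_, fun j h => ?_⟩
  · exact (le_iff_forall_not_le.1 h₁).1 i ((IHxl i _ _).2.1 h₂ h)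
  · exact (le_iff_forall_not_le.1 h₂).2 j ((IHzr j).2.2 h h₁)
  · exact (le_iff_forall_not_le.1 h₁).1 i ((IHyl i _).2.2 h₂ h)
  · exact (le_iff_forall_not_le.1 h₂).2 j ((IHxr j _ _).1 h h₁)
  · exact (le_iff_forall_not_le.1 h₁).1 i ((IHzl i).1 h₂ h)
  · exact (le_iff_forall_not_le.1 h₂).2 j ((IHyr j _).2.1 h h₁)

instance : Preorder PGame.{u} where
  le_refl := PGame.le_refl
  le_trans x y z := (le_trans_aux x y z).1
  lt_iff_le_not_ge _ _ := Iff.rfl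

theorem not_le_moveLeft (x : PGame.{u}) (i : x.LeftMoves) : ¬ x ≤ x.moveLeft i :=
  fun h => (le_iff_forall_not_le.1 h).1 i le_rfl

theorem not_moveRight_le (x : PGame.{u}) (j : x.RightMoves) : ¬ x.moveRight j ≤ x :=
  fun h => (le_iff_forall_not_le.1 h).2 j le_rfl

theorem not_le_of_le_moveLeft {x y : PGame.{u}} {i : y.LeftMoves} (h : x ≤ y.moveLeft i) :
    ¬ y ≤ x :=
  fun h' => not_le_moveLeft y i (h'.trans h)

theorem not_le_of_moveRight_le {x y : PGame.{u}} {j : x.RightMoves} (h : x.moveRight j ≤ y) :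
    ¬ y ≤ x :=
  fun h' => not_moveRight_le x j (h.trans h')

theorem not_le_iff_exists {x y : PGame.{u}} :
    ¬ y ≤ x ↔ (∃ i, x ≤ y.moveLeft i) ∨ ∃ j, x.moveRight j ≤ y := by
  simp only [le_iff_forall_not_le (x := y), not_and_or, not_forall, not_not]

theorem equiv_of_exists {x y : PGame.{u}}
    (hl₁ : ∀ i, ∃ j, x.moveLeft i ≈ y.moveLeft j) (hl₂ : ∀ j, ∃ i, x.moveLeft i ≈ y.moveLeft j)
    (hr₁ : ∀ i, ∃ j, x.moveRight i ≈ y.moveRight j)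
    (hr₂ : ∀ j, ∃ i, x.moveRight i ≈ y.moveRight j) : x ≈ y := by
  refine ⟨le_iff_forall_not_le.2 ⟨fun i h => ?_, fun j h => ?_⟩,
    le_iff_forall_not_le.2 ⟨fun j h => ?_, fun i h => ?_⟩⟩
  · obtain ⟨j, hj⟩ := hl₁ i; exact not_le_moveLeft y j (h.trans hj.1)
  · obtain ⟨i, hi⟩ := hr₂ j; exact not_moveRight_le x i (hi.1.trans h)
  · obtain ⟨i, hi⟩ := hl₂ j; exact not_le_moveLeft x i (h.trans hi.2)
  · obtain ⟨j, hj⟩ := hr₁ i; exact not_moveRight_le y j (hj.2.trans h)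

/-! ### Negation and addition -/

theorem neg_le_neg_iff_aux (x y : PGame.{u}) : (-x ≤ -y ↔ y ≤ x) ∧ (-y ≤ -x ↔ x ≤ y) := by
  induction x generalizing y with | mk xl xr xL xR IHxl IHxr => ?_
  induction y with | mk yl yr yL yR IHyl IHyr => ?_
  constructor
  · exact le_iff_forall_not_le.trans (and_comm.trans ((and_congr
      (forall_congr' fun j => not_congr (IHyl j).2)
      (forall_congr' fun i => not_congr (IHxr i _).2)).trans mk_le_mk.symm))
  · exact le_iff_forall_not_le.trans (and_comm.trans ((and_congr
      (forall_congr' fun i => not_congr (IHxl i _).1)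
      (forall_congr' fun j => not_congr (IHyr j).1)).trans mk_le_mk.symm))

protected theorem neg_le_neg_iff {x y : PGame.{u}} : -x ≤ -y ↔ y ≤ x := (neg_le_neg_iff_aux x y).1

theorem not_le_add_of_add_moveRight_le {x y z : PGame.{u}} (j : y.RightMoves)
    (h : x + y.moveRight j ≤ z) : ¬ z ≤ x + y := by
  cases x; cases y; exact not_le_of_moveRight_le (j := Sum.inr j) h

theorem not_le_add_of_moveRight_add_le {x y z : PGame.{u}} (i : x.RightMoves)
    (h : x.moveRight i + y ≤ z) : ¬ z ≤ x + y := by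
  cases x; cases y; exact not_le_of_moveRight_le (j := Sum.inl i) h

theorem not_add_le_of_le_add_moveLeft {x y z : PGame.{u}} (j : y.LeftMoves)
    (h : z ≤ x + y.moveLeft j) : ¬ x + y ≤ z := by
  cases x; cases y; exact not_le_of_le_moveLeft (i := Sum.inr j) h

theorem not_add_le_of_le_moveLeft_add {x y z : PGame.{u}} (i : x.LeftMoves)
    (h : z ≤ x.moveLeft i + y) : ¬ x + y ≤ z := by
  cases x; cases y; exact not_le_of_le_moveLeft (i := Sum.inl i) h

theorem add_le_add_right_aux (x y z : PGame.{u}) :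
    (x ≤ y → x + z ≤ y + z) ∧ (¬ y ≤ x → ¬ y + z ≤ x + z) := by
  induction x generalizing y z with | mk xl xr xL xR IHxl IHxr => ?_
  induction y generalizing z with | mk yl yr yL yR IHyl IHyr => ?_
  induction z with | mk zl zr zL zR IHzl IHzr => ?_
  refine ⟨fun h => le_iff_forall_not_le.2 ⟨?_, ?_⟩, fun h => ?_⟩
  · rintro (i | k)
    · exact (IHxl i _ _).2 ((le_iff_forall_not_le.1 h).1 i)
    · exact not_add_le_of_le_add_moveLeft (x := mk yl yr yL yR) (y := mk zl zr zL zR) k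
        ((IHzl k).1 h)
  · rintro (j | k)
    · exact (IHyr j _).2 ((le_iff_forall_not_le.1 h).2 j)
    · exact not_le_add_of_add_moveRight_le (x := mk xl xr xL xR) (y := mk zl zr zL zR) k
        ((IHzr k).1 h)
  · rcases not_le_iff_exists.1 h with ⟨i, hi⟩ | ⟨j, hj⟩
    · exact not_add_le_of_le_moveLeft_add (x := mk yl yr yL yR) i ((IHyl i _).1 hi)
    · exact not_le_add_of_moveRight_add_le (x := mk xl xr xL xR) j ((IHxr j _ _).1 hj)

protected theorem add_le_add_right {x y : PGame.{u}} (h : x ≤ y) (z : PGame.{u}) : x + z ≤ y + z :=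
  (add_le_add_right_aux x y z).1 h

theorem add_comm_equiv (x y : PGame.{u}) : x + y ≈ y + x := by
  induction x generalizing y with | mk xl xr xL xR IHxl IHxr => ?_
  induction y with | mk yl yr yL yR IHyl IHyr => ?_
  refine equiv_of_exists ?_ ?_ ?_ ?_
  · rintro (i | j)
    exacts [⟨Sum.inr i, IHxl i _⟩, ⟨Sum.inl j, IHyl j⟩]
  · rintro (j | i)
    exacts [⟨Sum.inr j, IHyl j⟩, ⟨Sum.inl i, IHxl i _⟩]
  · rintro (i | j)
    exacts [⟨Sum.inr i, IHxr i _⟩, ⟨Sum.inl j, IHyr j⟩]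
  · rintro (j | i)
    exacts [⟨Sum.inr j, IHyr j⟩, ⟨Sum.inl i, IHxr i _⟩]

theorem add_assoc_equiv (x y z : PGame.{u}) : x + y + z ≈ x + (y + z) := by
  induction x generalizing y z with | mk xl xr xL xR IHxl IHxr => ?_
  induction y generalizing z with | mk yl yr yL yR IHyl IHyr => ?_
  induction z with | mk zl zr zL zR IHzl IHzr => ?_
  refine equiv_of_exists ?_ ?_ ?_ ?_
  · rintro ((i | j) | k)
    exacts [⟨Sum.inl i, IHxl i _ _⟩, ⟨Sum.inr (Sum.inl j), IHyl j _⟩, ⟨Sum.inr (Sum.inr k), IHzl k⟩]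
  · rintro (i | j | k)
    exacts [⟨Sum.inl (Sum.inl i), IHxl i _ _⟩, ⟨Sum.inl (Sum.inr j), IHyl j _⟩, ⟨Sum.inr k, IHzl k⟩]
  · rintro ((i | j) | k)
    exacts [⟨Sum.inl i, IHxr i _ _⟩, ⟨Sum.inr (Sum.inl j), IHyr j _⟩, ⟨Sum.inr (Sum.inr k), IHzr k⟩]
  · rintro (i | j | k)
    exacts [⟨Sum.inl (Sum.inl i), IHxr i _ _⟩, ⟨Sum.inl (Sum.inr j), IHyr j _⟩, ⟨Sum.inr k, IHzr k⟩]

instance : Zero PGame.{u} := ⟨mk PEmpty PEmpty PEmpty.elim PEmpty.elim⟩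

theorem add_zero_equiv (x : PGame.{u}) : x + 0 ≈ x := by
  induction x with | mk xl xr xL xR IHl IHr => ?_
  refine equiv_of_exists ?_ (fun i => ⟨Sum.inl i, IHl i⟩) ?_ (fun j => ⟨Sum.inl j, IHr j⟩)
  · rintro (i | e)
    exacts [⟨i, IHl i⟩, e.elim]
  · rintro (j | e)
    exacts [⟨j, IHr j⟩, e.elim]

theorem add_neg_equiv (x : PGame.{u}) : x + -x ≈ 0 := by
  induction x with | mk xl xr xL xR IHxl IHxr => ?_
  refine ⟨le_iff_forall_not_le.2 ⟨?_, nofun⟩, le_iff_forall_not_le.2 ⟨nofun, ?_⟩⟩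
  · rintro (i | j)
    · exact not_le_add_of_add_moveRight_le (x := xL i) (y := -mk xl xr xL xR) i (IHxl i).1
    · exact not_le_add_of_moveRight_add_le (x := mk xl xr xL xR) (y := -xR j) j (IHxr j).1
  · rintro (j | i)
    · exact not_add_le_of_le_add_moveLeft (x := xR j) (y := -mk xl xr xL xR) j (IHxr j).2
    · exact not_add_le_of_le_moveLeft_add (x := mk xl xr xL xR) (y := -xL i) i (IHxl i).2

theorem add_congr {w x y z : PGame.{u}} (h₁ : w ≈ x) (h₂ : y ≈ z) : w + y ≈ x + z := by
  have hc := add_comm_equiv x y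
  have hc' := add_comm_equiv z x
  exact ⟨(PGame.add_le_add_right h₁.1 y).trans
      (hc.1.trans ((PGame.add_le_add_right h₂.1 x).trans hc'.1)),
    (hc'.2.trans (PGame.add_le_add_right h₂.2 x)).trans
      (hc.2.trans (PGame.add_le_add_right h₁.2 y))⟩

/-! ### The ordered group of games -/

def setoid : Setoid PGame.{u} where
  r x y := x ≈ y
  iseqv := ⟨fun _ => ⟨le_rfl, le_rfl⟩, fun h => ⟨h.2, h.1⟩,
    fun h₁ h₂ => ⟨h₁.1.trans h₂.1, h₂.2.trans h₁.2⟩⟩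

end SetTheory.PGame

noncomputable section

namespace SetTheory

def Game : Type (u + 1) := Quotient PGame.setoid.{u}

namespace Game

def mk (x : PGame.{u}) : Game.{u} := Quotient.mk PGame.setoid x

theorem mk_eq_mk {x y : PGame.{u}} : mk x = mk y ↔ x ≈ y := Quotient.eq (r := PGame.setoid)

instance : Zero Game.{u} := ⟨mk 0⟩

instance : Neg Game.{u} :=
  ⟨Quotient.map _ fun _ _ h => ⟨PGame.neg_le_neg_iff.2 h.2, PGame.neg_le_neg_iff.2 h.1⟩⟩

instance : Add Game.{u} := ⟨Quotient.map₂ _ fun _ _ h₁ _ _ h₂ => add_congr h₁ h₂⟩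

instance : LE Game.{u} :=
  ⟨Quotient.lift₂ (· ≤ ·) fun _ _ _ _ h₁ h₂ =>
    propext ⟨fun h => h₁.2.trans (h.trans h₂.1), fun h => h₁.1.trans (h.trans h₂.2)⟩⟩

instance : PartialOrder Game.{u} where
  lt a b := a ≤ b ∧ ¬ b ≤ a
  lt_iff_le_not_ge _ _ := Iff.rfl
  le_refl a := Quotient.inductionOn a le_refl
  le_trans a b c := Quotient.inductionOn₃ a b c fun x y z => @le_trans PGame _ x y z
  le_antisymm a b := Quotient.inductionOn₂ a b fun _ _ h₁ h₂ => Quotient.sound ⟨h₁, h₂⟩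

instance : AddCommGroup Game.{u} where
  add_assoc a b c := Quotient.inductionOn₃ a b c fun x y z => Quotient.sound (add_assoc_equiv x y z)
  zero_add a := Quotient.inductionOn a fun x =>
    (Quotient.sound (add_comm_equiv 0 x)).trans (Quotient.sound (add_zero_equiv x))
  add_zero a := Quotient.inductionOn a fun x => Quotient.sound (add_zero_equiv x)
  neg_add_cancel a := Quotient.inductionOn a fun x =>
    (Quotient.sound (add_comm_equiv (-x) x)).trans (Quotient.sound (add_neg_equiv x))
  add_comm a b := Quotient.inductionOn₂ a b fun x y => Quotient.sound (add_comm_equiv x y)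
  nsmul := nsmulRec
  zsmul := zsmulRec

instance : IsOrderedAddMonoid Game.{u} where
  add_le_add_left a b h c :=
    Quotient.inductionOn₃ a b c (fun x y z (h : x ≤ y) => PGame.add_le_add_right h z) h

theorem mk_le_mk {x y : PGame.{u}} : mk x ≤ mk y ↔ x ≤ y := Iff.rfl

theorem mk_lt_mk {x y : PGame.{u}} : mk x < mk y ↔ x < y := Iff.rfl

end Game

end SetTheory

end

namespace SetTheory.PGame

open Relation

/-! ### Numbers -/

theorem numeric_def {x : PGame.{u}} : x.Numeric ↔ (∀ i j, x.moveLeft i < x.moveRight j) ∧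
    (∀ i, (x.moveLeft i).Numeric) ∧ ∀ j, (x.moveRight j).Numeric := by
  cases x; exact Iff.rfl

namespace Numeric

variable {x y : PGame.{u}}

theorem moveLeft (hx : x.Numeric) (i : x.LeftMoves) : (x.moveLeft i).Numeric :=
  (numeric_def.1 hx).2.1 i

theorem moveRight (hx : x.Numeric) (j : x.RightMoves) : (x.moveRight j).Numeric :=
  (numeric_def.1 hx).2.2 j

theorem moveLeft_lt_moveRight (hx : x.Numeric) (i : x.LeftMoves) (j : x.RightMoves) :
    x.moveLeft i < x.moveRight j :=
  (numeric_def.1 hx).1 i j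

theorem isOption {a : PGame.{u}} (hx : x.Numeric) (h : IsOption a x) : a.Numeric := by
  cases x
  rcases h with ⟨i, rfl⟩ | ⟨j, rfl⟩
  exacts [hx.moveLeft i, hx.moveRight j]

theorem le_of_not_le (hx : x.Numeric) (hy : y.Numeric) (h : ¬ y ≤ x) : x ≤ y := by
  induction x generalizing y with | mk xl xr xL xR IHxl IHxr => ?_
  by_contra h'
  rcases not_le_iff_exists.1 h with ⟨i, hi⟩ | ⟨j, hj⟩ <;>
    rcases not_le_iff_exists.1 h' with ⟨i', hi'⟩ | ⟨j', hj'⟩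
  · exact (fun h => not_le_moveLeft y i (hi'.trans h)) <| IHxl i' (hx.moveLeft i')
      (hy.moveLeft i) fun h => not_le_moveLeft (mk xl xr xL xR) i' (hi.trans h)
  · exact (hy.moveLeft_lt_moveRight i j').2 (hj'.trans hi)
  · exact (hx.moveLeft_lt_moveRight i' j).2 (hj.trans hi')
  · exact (fun h => not_moveRight_le (mk xl xr xL xR) j (h.trans hj')) <| IHxr j (hx.moveRight j)
      (hy.moveRight j') fun h => not_moveRight_le y j' (h.trans hj)

theorem lt_of_not_le (hx : x.Numeric) (hy : y.Numeric) (h : ¬ y ≤ x) : x < y :=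
  ⟨hx.le_of_not_le hy h, h⟩

theorem lt_or_equiv_or_gt (hx : x.Numeric) (hy : y.Numeric) : x < y ∨ x ≈ y ∨ y < x := by
  by_cases h₁ : x ≤ y
  · by_cases h₂ : y ≤ x
    exacts [Or.inr (Or.inl ⟨h₁, h₂⟩), Or.inl ⟨h₁, h₂⟩]
  · exact Or.inr (Or.inr (hy.lt_of_not_le hx h₁))

theorem moveLeft_lt (hx : x.Numeric) (i : x.LeftMoves) : x.moveLeft i < x :=
  (hx.moveLeft i).lt_of_not_le hx (not_le_moveLeft x i)

theorem lt_moveRight (hx : x.Numeric) (j : x.RightMoves) : x < x.moveRight j :=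
  hx.lt_of_not_le (hx.moveRight j) (not_moveRight_le x j)

theorem neg (hx : x.Numeric) : (-x).Numeric := by
  induction x with | mk xl xr xL xR IHxl IHxr => ?_
  refine numeric_def.2 ⟨fun j i => ?_, fun j => IHxr j (hx.moveRight j),
    fun i => IHxl i (hx.moveLeft i)⟩
  exact Game.mk_lt_mk.1 <| neg_lt_neg (Game.mk_lt_mk.2 (hx.moveLeft_lt_moveRight i j))

theorem add (hx : x.Numeric) (hy : y.Numeric) : (x + y).Numeric := by
  induction x generalizing y with | mk xl xr xL xR IHxl IHxr => ?_
  induction y with | mk yl yr yL yR IHyl IHyr => ?_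
  refine numeric_def.2 ⟨?_, ?_, ?_⟩
  · rintro (i | k) (j | l) <;> refine Game.mk_lt_mk.1 ?_
    · exact add_lt_add_left (Game.mk_lt_mk.2 (hx.moveLeft_lt_moveRight i j))
        (Game.mk (mk yl yr yL yR))
    · exact add_lt_add (Game.mk_lt_mk.2 (hx.moveLeft_lt i)) (Game.mk_lt_mk.2 (hy.lt_moveRight l))
    · exact add_lt_add (Game.mk_lt_mk.2 (hx.lt_moveRight j)) (Game.mk_lt_mk.2 (hy.moveLeft_lt k))
    · exact add_lt_add_right (Game.mk_lt_mk.2 (hy.moveLeft_lt_moveRight k l))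
        (Game.mk (mk xl xr xL xR))
  · rintro (i | k)
    exacts [IHxl i (hx.moveLeft i) hy, IHyl k (hy.moveLeft k)]
  · rintro (j | l)
    exacts [IHxr j (hx.moveRight j) hy, IHyr l (hy.moveRight l)]

theorem sub (hx : x.Numeric) (hy : y.Numeric) : (x - y).Numeric := hx.add hy.neg

end Numeric

/-! ### Multiplication -/

noncomputable def mulOption (x y a b : PGame.{u}) : PGame.{u} := a * y + x * b - a * b

theorem mk_mulOption (x y a b : PGame.{u}) :
    Game.mk (mulOption x y a b) = Game.mk (a * y) + Game.mk (x * b) - Game.mk (a * b) :=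
  rfl

theorem mk_mul_comm (x y : PGame.{u}) : Game.mk (x * y) = Game.mk (y * x) := by
  induction x generalizing y with | mk xl xr xL xR IHxl IHxr => ?_
  induction y with | mk yl yr yL yR IHyl IHyr => ?_
  have swap {a b : PGame.{u}} (h₁ : Game.mk (a * mk yl yr yL yR) = Game.mk (mk yl yr yL yR * a))
      (h₂ : Game.mk (mk xl xr xL xR * b) = Game.mk (b * mk xl xr xL xR))
      (h₃ : Game.mk (a * b) = Game.mk (b * a)) :
      mulOption (mk xl xr xL xR) (mk yl yr yL yR) a b ≈
        mulOption (mk yl yr yL yR) (mk xl xr xL xR) b a := by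
    rw [← Game.mk_eq_mk, mk_mulOption, mk_mulOption, h₁, h₂, h₃, add_comm (Game.mk (b * _))]
  refine Game.mk_eq_mk.2 (equiv_of_exists ?_ ?_ ?_ ?_)
  · rintro (⟨i, k⟩ | ⟨j, l⟩)
    exacts [⟨Sum.inl (k, i), swap (IHxl i _) (IHyl k) (IHxl i _)⟩,
      ⟨Sum.inr (l, j), swap (IHxr j _) (IHyr l) (IHxr j _)⟩]
  · rintro (⟨k, i⟩ | ⟨l, j⟩)
    exacts [⟨Sum.inl (i, k), swap (IHxl i _) (IHyl k) (IHxl i _)⟩,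
      ⟨Sum.inr (j, l), swap (IHxr j _) (IHyr l) (IHxr j _)⟩]
  · rintro (⟨i, l⟩ | ⟨j, k⟩)
    exacts [⟨Sum.inr (l, i), swap (IHxl i _) (IHyr l) (IHxl i _)⟩,
      ⟨Sum.inl (k, j), swap (IHxr j _) (IHyl k) (IHxr j _)⟩]
  · rintro (⟨k, j⟩ | ⟨l, i⟩)
    exacts [⟨Sum.inr (j, k), swap (IHxr j _) (IHyl k) (IHxr j _)⟩,
      ⟨Sum.inl (i, l), swap (IHxl i _) (IHyr l) (IHxl i _)⟩]

theorem mk_mulOption_comm (x y a b : PGame.{u}) :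
    Game.mk (mulOption x y a b) = Game.mk (mulOption y x b a) := by
  rw [mk_mulOption, mk_mulOption, mk_mul_comm a y, mk_mul_comm x b, mk_mul_comm a b,
    add_comm (Game.mk (y * a))]

theorem mul_le_mul_of_mulOption_lt {x₁ y₁ x₂ y₂ : PGame.{u}}
    (hLL : ∀ i k, mulOption x₁ y₁ (x₁.moveLeft i) (y₁.moveLeft k) < x₂ * y₂)
    (hRR : ∀ j l, mulOption x₁ y₁ (x₁.moveRight j) (y₁.moveRight l) < x₂ * y₂)
    (hLR : ∀ i l, x₁ * y₁ < mulOption x₂ y₂ (x₂.moveLeft i) (y₂.moveRight l))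
    (hRL : ∀ j k, x₁ * y₁ < mulOption x₂ y₂ (x₂.moveRight j) (y₂.moveLeft k)) :
    x₁ * y₁ ≤ x₂ * y₂ := by
  cases x₁; cases y₁; cases x₂; cases y₂
  refine le_iff_forall_not_le.2 ⟨?_, ?_⟩
  · rintro (⟨i, k⟩ | ⟨j, l⟩)
    exacts [(hLL i k).2, (hRR j l).2]
  · rintro (⟨i, l⟩ | ⟨j, k⟩)
    exacts [(hLR i l).2, (hRL j k).2]

theorem numeric_mul_of_mulOption {x y : PGame.{u}}
    (hnum : ∀ a b, IsOption a x → IsOption b y → (mulOption x y a b).Numeric)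
    (hLL_LR : ∀ i i' k l, mulOption x y (x.moveLeft i) (y.moveLeft k) <
      mulOption x y (x.moveLeft i') (y.moveRight l))
    (hLL_RL : ∀ i j k k', mulOption x y (x.moveLeft i) (y.moveLeft k) <
      mulOption x y (x.moveRight j) (y.moveLeft k'))
    (hRR_LR : ∀ j i l l', mulOption x y (x.moveRight j) (y.moveRight l) <
      mulOption x y (x.moveLeft i) (y.moveRight l'))
    (hRR_RL : ∀ j j' l k, mulOption x y (x.moveRight j) (y.moveRight l) <
      mulOption x y (x.moveRight j') (y.moveLeft k)) :
    (x * y).Numeric := by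
  cases x; cases y
  refine numeric_def.2 ⟨?_, ?_, ?_⟩
  · rintro (⟨i, k⟩ | ⟨j, l⟩) (⟨i', l'⟩ | ⟨j', k'⟩)
    exacts [hLL_LR i i' k l', hLL_RL i j' k k', hRR_LR j i' l l', hRR_RL j j' l k']
  · rintro (⟨i, k⟩ | ⟨j, l⟩)
    exacts [hnum _ _ (.inl ⟨i, rfl⟩) (.inl ⟨k, rfl⟩), hnum _ _ (.inr ⟨j, rfl⟩) (.inr ⟨l, rfl⟩)]
  · rintro (⟨i, l⟩ | ⟨j, k⟩)
    exacts [hnum _ _ (.inl ⟨i, rfl⟩) (.inr ⟨l, rfl⟩), hnum _ _ (.inr ⟨j, rfl⟩) (.inl ⟨k, rfl⟩)]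

/-- `(x₂ - x₁) * (y₂ - y₁) > 0`, expanded in `Game`. -/
def MulDiffPos (x₁ x₂ y₁ y₂ : PGame.{u}) : Prop :=
  Game.mk (x₁ * y₂) + Game.mk (x₂ * y₁) < Game.mk (x₁ * y₁) + Game.mk (x₂ * y₂)

def MulDiffPosOptions (x₁ x₂ y : PGame.{u}) : Prop :=
  (∀ k, MulDiffPos x₁ x₂ (y.moveLeft k) y) ∧ ∀ l, MulDiffPos x₁ x₂ y (y.moveRight l)

def MulCongr (x₁ x₂ y : PGame.{u}) : Prop :=
  x₁ ≈ x₂ → Game.mk (x₁ * y) = Game.mk (x₂ * y)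

def MulCompat (x₁ x₂ y : PGame.{u}) : Prop :=
  MulCongr x₁ x₂ y ∧ (x₁ < x₂ → MulDiffPosOptions x₁ x₂ y)

def MulCompatOptions (x y : PGame.{u}) : Prop :=
  ∀ x₁ x₂ z, IsOption x₁ x → IsOption x₂ x → (z = y ∨ IsOption z y) → MulCompat x₁ x₂ z

variable {x y x₁ x₂ x₃ y₁ y₂ : PGame.{u}}

theorem mulOption_lt_mulOption_comm {a b a' b' : PGame.{u}} :
    mulOption x y a b < mulOption x y a' b' ↔ mulOption y x b a < mulOption y x b' a' := by
  rw [← Game.mk_lt_mk, ← Game.mk_lt_mk, mk_mulOption_comm, mk_mulOption_comm x]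

theorem mulDiffPos_comm : MulDiffPos x₁ x₂ y₁ y₂ ↔ MulDiffPos y₁ y₂ x₁ x₂ := by
  rw [MulDiffPos, MulDiffPos, mk_mul_comm x₁, mk_mul_comm x₂, mk_mul_comm x₁, mk_mul_comm x₂,
    add_comm (Game.mk (y₂ * x₁))]

theorem MulDiffPos.trans (h₁ : MulDiffPos x₁ x₂ y₁ y₂) (h₂ : MulDiffPos x₂ x₃ y₁ y₂) :
    MulDiffPos x₁ x₃ y₁ y₂ :=
  lt_of_lt_of_sub_eq_sub (add_lt_add h₁ h₂) (by abel)

theorem MulDiffPosOptions.trans (h₁ : MulDiffPosOptions x₁ x₂ y)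
    (h₂ : MulDiffPosOptions x₂ x₃ y) : MulDiffPosOptions x₁ x₃ y :=
  ⟨fun k => (h₁.1 k).trans (h₂.1 k), fun l => (h₁.2 l).trans (h₂.2 l)⟩

theorem MulDiffPosOptions.congr {x₁' x₂' : PGame.{u}} (h : MulDiffPosOptions x₁ x₂ y)
    (h₁ : ∀ z, (z = y ∨ IsOption z y) → Game.mk (x₁ * z) = Game.mk (x₁' * z))
    (h₂ : ∀ z, (z = y ∨ IsOption z y) → Game.mk (x₂ * z) = Game.mk (x₂' * z)) :
    MulDiffPosOptions x₁' x₂' y := by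
  refine ⟨fun k => ?_, fun l => ?_⟩ <;> unfold MulDiffPos
  · rw [← h₁ _ (.inl rfl), ← h₂ _ (.inl rfl), ← h₁ _ (.inr (isOption_moveLeft y k)),
      ← h₂ _ (.inr (isOption_moveLeft y k))]
    exact h.1 k
  · rw [← h₁ _ (.inl rfl), ← h₂ _ (.inl rfl), ← h₁ _ (.inr (isOption_moveRight y l)),
      ← h₂ _ (.inr (isOption_moveRight y l))]
    exact h.2 l

namespace Numeric

theorem mulOption_moveLeft_moveLeft_lt (h : (x * y).Numeric) (i : x.LeftMoves)
    (k : y.LeftMoves) : mulOption x y (x.moveLeft i) (y.moveLeft k) < x * y := by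
  cases x; cases y; exact h.moveLeft_lt (Sum.inl (i, k))

theorem mulOption_moveRight_moveRight_lt (h : (x * y).Numeric) (j : x.RightMoves)
    (l : y.RightMoves) : mulOption x y (x.moveRight j) (y.moveRight l) < x * y := by
  cases x; cases y; exact h.moveLeft_lt (Sum.inr (j, l))

theorem lt_mulOption_moveLeft_moveRight (h : (x * y).Numeric) (i : x.LeftMoves)
    (l : y.RightMoves) : x * y < mulOption x y (x.moveLeft i) (y.moveRight l) := by
  cases x; cases y; exact h.lt_moveRight (Sum.inl (i, l))

theorem lt_mulOption_moveRight_moveLeft (h : (x * y).Numeric) (j : x.RightMoves)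
    (k : y.LeftMoves) : x * y < mulOption x y (x.moveRight j) (y.moveLeft k) := by
  cases x; cases y; exact h.lt_moveRight (Sum.inr (j, k))

theorem mulDiffPosOptions_moveLeft (h : (x * y).Numeric) (i : x.LeftMoves) :
    MulDiffPosOptions (x.moveLeft i) x y := by
  refine ⟨fun k => ?_, fun l => ?_⟩
  · exact lt_of_lt_of_sub_eq_sub (Game.mk_lt_mk.2 (h.mulOption_moveLeft_moveLeft_lt i k))
      (by rw [mk_mulOption]; abel)
  · exact lt_of_lt_of_sub_eq_sub (Game.mk_lt_mk.2 (h.lt_mulOption_moveLeft_moveRight i l))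
      (by rw [mk_mulOption]; abel)

theorem mulDiffPosOptions_moveRight (h : (x * y).Numeric) (j : x.RightMoves) :
    MulDiffPosOptions x (x.moveRight j) y := by
  refine ⟨fun k => ?_, fun l => ?_⟩
  · exact lt_of_lt_of_sub_eq_sub (Game.mk_lt_mk.2 (h.lt_mulOption_moveRight_moveLeft j k))
      (by rw [mk_mulOption]; abel)
  · exact lt_of_lt_of_sub_eq_sub (Game.mk_lt_mk.2 (h.mulOption_moveRight_moveRight_lt j l))
      (by rw [mk_mulOption]; abel)

end Numeric

theorem mulOption_lt_mulOption_of_moveLeft (hx : x.Numeric) (hy : y.Numeric)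
    (ihx : MulCompatOptions x y) (ihy : MulCompatOptions y x)
    (i i' : x.LeftMoves) (k : y.LeftMoves) (l : y.RightMoves) :
    mulOption x y (x.moveLeft i) (y.moveLeft k) <
      mulOption x y (x.moveLeft i') (y.moveRight l) := by
  have cross (i₀ : x.LeftMoves) : MulDiffPos (x.moveLeft i₀) x (y.moveLeft k) (y.moveRight l) :=
    mulDiffPos_comm.2 (((ihy _ _ x (isOption_moveLeft y k) (isOption_moveRight y l) (.inl rfl)).2
      (hy.moveLeft_lt_moveRight k l)).1 i₀)
  have compat (z : PGame.{u}) (hz : z = y ∨ IsOption z y) {i₁ i₂ : x.LeftMoves} :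
      MulCompat (x.moveLeft i₁) (x.moveLeft i₂) z :=
    ihx _ _ z (isOption_moveLeft x i₁) (isOption_moveLeft x i₂) hz
  refine Game.mk_lt_mk.1 ?_
  rcases (hx.moveLeft i).lt_or_equiv_or_gt (hx.moveLeft i') with h | h | h
  · exact lt_of_lt_of_sub_eq_sub (add_lt_add (((compat y (.inl rfl)).2 h).1 k) (cross i'))
      (by rw [mk_mulOption, mk_mulOption]; abel)
  · rw [mk_mulOption, mk_mulOption, (compat y (.inl rfl)).1 h,
      ← (compat _ (.inr (isOption_moveRight y l))).1 h]
    exact lt_of_lt_of_sub_eq_sub (cross i) (by abel)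
  · exact lt_of_lt_of_sub_eq_sub (add_lt_add (((compat y (.inl rfl)).2 h).2 l) (cross i))
      (by rw [mk_mulOption, mk_mulOption]; abel)

theorem mulOption_lt_mulOption_of_moveRight (hx : x.Numeric) (hy : y.Numeric)
    (ihx : MulCompatOptions x y) (ihy : MulCompatOptions y x)
    (j j' : x.RightMoves) (l : y.RightMoves) (k : y.LeftMoves) :
    mulOption x y (x.moveRight j) (y.moveRight l) <
      mulOption x y (x.moveRight j') (y.moveLeft k) := by
  have cross (j₀ : x.RightMoves) :
      MulDiffPos x (x.moveRight j₀) (y.moveLeft k) (y.moveRight l) :=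
    mulDiffPos_comm.2 (((ihy _ _ x (isOption_moveLeft y k) (isOption_moveRight y l) (.inl rfl)).2
      (hy.moveLeft_lt_moveRight k l)).2 j₀)
  have compat (z : PGame.{u}) (hz : z = y ∨ IsOption z y) {j₁ j₂ : x.RightMoves} :
      MulCompat (x.moveRight j₁) (x.moveRight j₂) z :=
    ihx _ _ z (isOption_moveRight x j₁) (isOption_moveRight x j₂) hz
  refine Game.mk_lt_mk.1 ?_
  rcases (hx.moveRight j).lt_or_equiv_or_gt (hx.moveRight j') with h | h | h
  · exact lt_of_lt_of_sub_eq_sub (add_lt_add (((compat y (.inl rfl)).2 h).1 k) (cross j))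
      (by rw [mk_mulOption, mk_mulOption]; abel)
  · rw [mk_mulOption, mk_mulOption, (compat y (.inl rfl)).1 h,
      ← (compat _ (.inr (isOption_moveLeft y k))).1 h]
    exact lt_of_lt_of_sub_eq_sub (cross j) (by abel)
  · exact lt_of_lt_of_sub_eq_sub (add_lt_add (((compat y (.inl rfl)).2 h).2 l) (cross j'))
      (by rw [mk_mulOption, mk_mulOption]; abel)

theorem numeric_mul_of_options (hx : x.Numeric) (hy : y.Numeric)
    (hxy : ∀ a, IsOption a x → (a * y).Numeric) (hxy' : ∀ b, IsOption b y → (x * b).Numeric)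
    (hab : ∀ a b, IsOption a x → IsOption b y → (a * b).Numeric)
    (ihx : MulCompatOptions x y) (ihy : MulCompatOptions y x) : (x * y).Numeric :=
  numeric_mul_of_mulOption (fun a b ha hb => ((hxy a ha).add (hxy' b hb)).sub (hab a b ha hb))
    (mulOption_lt_mulOption_of_moveLeft hx hy ihx ihy)
    (fun i j k k' => mulOption_lt_mulOption_comm.2
      (mulOption_lt_mulOption_of_moveLeft hy hx ihy ihx k k' i j))
    (fun j i l l' => mulOption_lt_mulOption_comm.2
      (mulOption_lt_mulOption_of_moveRight hy hx ihy ihx l l' j i))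
    (mulOption_lt_mulOption_of_moveRight hx hy ihx ihy)

theorem mul_le_mul_of_mulDiffPosOptions
    (hopt : ∀ z, IsOption z y → Game.mk (x₁ * z) = Game.mk (x₂ * z))
    (hL₁ : ∀ i, MulDiffPosOptions (x₁.moveLeft i) x₂ y)
    (hR₁ : ∀ j, MulDiffPosOptions x₂ (x₁.moveRight j) y)
    (hL₂ : ∀ i, MulDiffPosOptions (x₂.moveLeft i) x₁ y)
    (hR₂ : ∀ j, MulDiffPosOptions x₁ (x₂.moveRight j) y) : x₁ * y ≤ x₂ * y := by
  refine mul_le_mul_of_mulOption_lt (fun i k => ?_) (fun j l => ?_) (fun i l => ?_)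
    (fun j k => ?_) <;> refine Game.mk_lt_mk.1 ?_
  · exact lt_of_lt_of_sub_eq_sub ((hL₁ i).1 k)
      (by rw [mk_mulOption, hopt _ (isOption_moveLeft y k)]; abel)
  · exact lt_of_lt_of_sub_eq_sub ((hR₁ j).2 l)
      (by rw [mk_mulOption, hopt _ (isOption_moveRight y l)]; abel)
  · exact lt_of_lt_of_sub_eq_sub ((hL₂ i).2 l)
      (by rw [mk_mulOption, hopt _ (isOption_moveRight y l)]; abel)
  · exact lt_of_lt_of_sub_eq_sub ((hR₂ j).1 k)
      (by rw [mk_mulOption, hopt _ (isOption_moveLeft y k)]; abel)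

theorem mul_le_mul_of_equiv (hx₁ : x₁.Numeric) (hx₂ : x₂.Numeric) (h : x₁ ≈ x₂)
    (hopt : ∀ z, IsOption z y → Game.mk (x₁ * z) = Game.mk (x₂ * z))
    (h₁ : ∀ a, IsOption a x₁ → MulCompat a x₂ y ∧ MulCompat x₂ a y)
    (h₂ : ∀ a, IsOption a x₂ → MulCompat a x₁ y ∧ MulCompat x₁ a y) : x₁ * y ≤ x₂ * y :=
  mul_le_mul_of_mulDiffPosOptions hopt
    (fun i => (h₁ _ (isOption_moveLeft x₁ i)).1.2 ((hx₁.moveLeft_lt i).trans_le h.1))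
    (fun j => (h₁ _ (isOption_moveRight x₁ j)).2.2 (h.2.trans_lt (hx₁.lt_moveRight j)))
    (fun i => (h₂ _ (isOption_moveLeft x₂ i)).1.2 ((hx₂.moveLeft_lt i).trans_le h.2))
    (fun j => (h₂ _ (isOption_moveRight x₂ j)).2.2 (h.1.trans_lt (hx₂.lt_moveRight j)))

theorem mulDiffPosOptions_of_lt (h : x₁ < x₂) (h₁ : (x₁ * y).Numeric) (h₂ : (x₂ * y).Numeric)
    (ihL : ∀ i z, (z = y ∨ IsOption z y) → MulCompat x₁ (x₂.moveLeft i) z)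
    (ihR : ∀ j z, (z = y ∨ IsOption z y) → MulCompat (x₁.moveRight j) x₂ z) :
    MulDiffPosOptions x₁ x₂ y := by
  rcases not_le_iff_exists.1 h.2 with ⟨i, hi⟩ | ⟨j, hj⟩
  · by_cases hc : x₂.moveLeft i ≤ x₁
    · exact (h₂.mulDiffPosOptions_moveLeft i).congr
        (fun z hz => ((ihL i z hz).1 ⟨hi, hc⟩).symm) fun _ _ => rfl
    · exact ((ihL i y (.inl rfl)).2 ⟨hi, hc⟩).trans (h₂.mulDiffPosOptions_moveLeft i)
  · by_cases hc : x₂ ≤ x₁.moveRight j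
    · exact (h₁.mulDiffPosOptions_moveRight j).congr (fun _ _ => rfl)
        fun z hz => (ihR j z hz).1 ⟨hj, hc⟩
    · exact (h₁.mulDiffPosOptions_moveRight j).trans ((ihR j y (.inl rfl)).2 ⟨hj, hc⟩)

/-! ### The simultaneous induction -/

inductive Args : Type (u + 1)
  | mul (x y : PGame.{u})
  | compare (x₁ x₂ y : PGame.{u})

namespace Args

def toMultiset : Args.{u} → Multiset PGame.{u}
  | mul x y => {x, y}
  | compare x₁ x₂ y => {x₁, x₂, y}

def Numeric (a : Args.{u}) : Prop := ∀ x ∈ a.toMultiset, x.Numeric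

def Holds : Args.{u} → Prop
  | mul x y => (x * y).Numeric
  | compare x₁ x₂ y => MulCompat x₁ x₂ y

end Args

def ArgsRel : Args.{u} → Args.{u} → Prop :=
  InvImage (TransGen (CutExpand IsOption)) Args.toMultiset

theorem wellFounded_argsRel : WellFounded ArgsRel.{u} :=
  InvImage.wf _ (wellFounded_isOption.cutExpand).transGen

theorem ArgsRel.numeric_closed {a' a : Args.{u}} (h : ArgsRel a' a) (ha : a.Numeric) :
    a'.Numeric := by
  have : Std.Irrefl IsOption.{u} := ⟨wellFounded_isOption.irrefl.irrefl⟩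
  have step {s' s : Multiset PGame.{u}} : CutExpand IsOption s' s →
      (∀ x ∈ s, x.Numeric) → ∀ x ∈ s', x.Numeric :=
    cutExpand_closed _ fun h hx => hx.isOption h
  have chain {s' s : Multiset PGame.{u}} (h : TransGen (CutExpand IsOption) s' s) :
      (∀ x ∈ s, x.Numeric) → ∀ x ∈ s', x.Numeric := by
    induction h with
    | single h => exact step h
    | tail _ h ih => exact fun hs => ih (step h hs)
  exact chain h ha

namespace ArgsRel

variable {a b x y z x₁ x₂ : PGame.{u}}

theorem trans {p q r : Args.{u}} (h₁ : ArgsRel p q) (h₂ : ArgsRel q r) : ArgsRel p r :=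
  TransGen.trans h₁ h₂

theorem mul_left (h : IsOption a x) : ArgsRel (.mul a y) (.mul x y) :=
  .single (cutExpand_pair_left h)

theorem mul_right (h : IsOption b y) : ArgsRel (.mul x b) (.mul x y) :=
  .single (cutExpand_pair_right h)

theorem compare_of_mul (h₁ : IsOption x₁ x) (h₂ : IsOption x₂ x) :
    ArgsRel (.compare x₁ x₂ y) (.mul x y) :=
  .single (cutExpand_double_left h₁ h₂)

theorem compare_left (h : IsOption z x₁) : ArgsRel (.compare z x₂ y) (.compare x₁ x₂ y) :=
  .single (cutExpand_single_add h {x₂, y})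

theorem compare_mid (h : IsOption z x₂) : ArgsRel (.compare x₁ z y) (.compare x₁ x₂ y) :=
  .single ((cutExpand_add_left {x₁}).2 (cutExpand_pair_left h))

theorem compare_right (h : IsOption z y) : ArgsRel (.compare x₁ x₂ z) (.compare x₁ x₂ y) :=
  .single ((cutExpand_add_left {x₁}).2 (cutExpand_pair_right h))

theorem mul_of_compare_left : ArgsRel (.mul x₁ y) (.compare x₁ x₂ y) :=
  .single ((cutExpand_add_left {x₁}).2 ((cutExpand_add_right {y}).2 cutExpand_zero))

theorem mul_of_compare_right : ArgsRel (.mul x₂ y) (.compare x₁ x₂ y) :=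
  .single ((cutExpand_add_right {x₂, y}).2 cutExpand_zero)

end ArgsRel

namespace Args

variable {x y x₁ x₂ : PGame.{u}}

def HoldsBelow (b : Args.{u}) : Prop := ∀ a, ArgsRel a b → a.Holds

theorem HoldsBelow.mono {b' b : Args.{u}} (h : b.HoldsBelow) (hb : ArgsRel b' b) :
    b'.HoldsBelow :=
  fun a ha => h a (ha.trans hb)

theorem HoldsBelow.of_toMultiset_eq {b' b : Args.{u}} (h : b.HoldsBelow)
    (e : b'.toMultiset = b.toMultiset) : b'.HoldsBelow := by
  intro a ha
  unfold ArgsRel InvImage at ha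
  exact h a (by unfold ArgsRel InvImage; rwa [← e])

theorem mulCompatOptions_of_holdsBelow (ih : (mul x y).HoldsBelow) : MulCompatOptions x y := by
  rintro x₁ x₂ z h₁ h₂ (rfl | hz)
  · exact ih _ (.compare_of_mul h₁ h₂)
  · exact ih _ ((ArgsRel.compare_of_mul h₁ h₂).trans (.mul_right hz))

theorem numeric_mul_of_holdsBelow (ih : (mul x y).HoldsBelow) (hx : x.Numeric)
    (hy : y.Numeric) : (x * y).Numeric :=
  numeric_mul_of_options hx hy (fun _ ha => ih _ (.mul_left ha)) (fun _ hb => ih _ (.mul_right hb))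
    (fun _ _ ha hb => ih _ ((ArgsRel.mul_right hb).trans (.mul_left ha)))
    (mulCompatOptions_of_holdsBelow ih)
    (mulCompatOptions_of_holdsBelow (ih.of_toMultiset_eq (Multiset.pair_comm y x)))

theorem mulCompat_of_holdsBelow (ih : (compare x₁ x₂ y).HoldsBelow) (hx₁ : x₁.Numeric)
    (hx₂ : x₂.Numeric) : MulCompat x₁ x₂ y := by
  have ih' : (compare x₂ x₁ y).HoldsBelow := ih.of_toMultiset_eq (Multiset.cons_swap x₂ x₁ {y})
  have around {z} (hz : z = y ∨ IsOption z y) : (compare x₁ x₂ z).HoldsBelow := by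
    rcases hz with rfl | hz
    exacts [ih, ih.mono (.compare_right hz)]
  have h₁ (a) (ha : IsOption a x₁) : MulCompat a x₂ y ∧ MulCompat x₂ a y :=
    ⟨ih _ (.compare_left ha), ih' _ (.compare_mid ha)⟩
  have h₂ (a) (ha : IsOption a x₂) : MulCompat a x₁ y ∧ MulCompat x₁ a y :=
    ⟨ih' _ (.compare_left ha), ih _ (.compare_mid ha)⟩
  refine ⟨fun h => le_antisymm ?_ ?_, fun h => ?_⟩
  · exact Game.mk_le_mk.2 <| mul_le_mul_of_equiv hx₁ hx₂ h
      (fun z hz => (ih _ (.compare_right hz)).1 h) h₁ h₂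
  · exact Game.mk_le_mk.2 <| mul_le_mul_of_equiv hx₂ hx₁ ⟨h.2, h.1⟩
      (fun z hz => ((ih _ (.compare_right hz)).1 h).symm) h₂ h₁
  · exact mulDiffPosOptions_of_lt h (ih _ .mul_of_compare_left) (ih _ .mul_of_compare_right)
      (fun i _ hz => around hz _ (.compare_mid (isOption_moveLeft x₂ i)))
      (fun j _ hz => around hz _ (.compare_left (isOption_moveRight x₁ j)))

theorem holds (a : Args.{u}) (ha : a.Numeric) : a.Holds := by
  induction a using wellFounded_argsRel.induction with | _ a ih => ?_
  have ih' : a.HoldsBelow := fun b hb => ih b hb (hb.numeric_closed ha)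
  cases a with
  | mul x y =>
    exact numeric_mul_of_holdsBelow ih' (ha x (by simp [toMultiset]))
      (ha y (by simp [toMultiset]))
  | compare x₁ x₂ y =>
    exact mulCompat_of_holdsBelow ih' (ha x₁ (by simp [toMultiset]))
      (ha x₂ (by simp [toMultiset]))

end Args

end SetTheory.PGame

/-- (1) The Conway product of two numbers is a number.
    (2) If `x₁ ≈ x₂` are numbers and `y` is a number, then `x₁ * y ≈ x₂ * y`. -/
theorem numeric_mul_and_congr (x y x₁ x₂ : PGame)
    (hx : x.Numeric) (hy : y.Numeric) (hx₁ : x₁.Numeric) (hx₂ : x₂.Numeric)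
    (h : x₁ ≈ x₂) :
    (x * y).Numeric ∧ (x₁ * y ≈ x₂ * y) :=
  ⟨Args.holds (.mul x y) (by simp [Args.Numeric, Args.toMultiset, hx, hy]),
    Game.mk_eq_mk.1 ((Args.holds (.compare x₁ x₂ y)
      (by simp [Args.Numeric, Args.toMultiset, hx₁, hx₂, hy])).1 h)⟩
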